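/- Let λ > 0, let (E_i)_{i≥1} be independent and identically distributed random variables, each with the exponential distribution of rate λ, and let (C_i)_{i≥1} be independent and identically distributed nonnegative integrable random variables with mean m > 0, with the sequence (C_i) independent of the sequence (E_i). Define the arrival times A_n = ∑_{i=1}^n E_i and the compound score process S(t) = ∑_{n : A_n ≤ t} C_n for t ≥ 0. Then for every ε > 0, the probability P(∀ t > 0 : S(t) ≤ (λ·m + ε)·t) is strictly greater than 0. -/

import Mathlib

open MeasureTheory ProbabilityTheory Filter Finset

/-!
Put `c = λm + ε` and `X i = C (i + 1) - c E (i + 1)` (`driftIncrement`). The `X i` are i.i.d.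
with mean `m - c / λ = -ε / λ < 0`, and if every partial sum `X 0 + ⋯ + X (n - 1)` is `≤ 0` then
the score collected up to the last arrival `A n ≤ t` is at most `c A n ≤ c t`. By the strong law,
the partial sums of `X 1, X 2, …` tend to `-∞`, so they stay below some level `M` with positive
probability. The first step `X 0` is independent of them and is `≤ -M` with positive probability
(a long exponential wait together with a bounded score), so the whole walk stays `≤ 0` forever
with positive probability.
-/

namespace MeasurableSpace

variable {Ω ι : Type*}

lemma sup_eq_generateFrom_image2_inter (m₁ m₂ : MeasurableSpace Ω) :
    m₁ ⊔ m₂ = generateFrom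
      (Set.image2 (· ∩ ·) {s | MeasurableSet[m₁] s} {s | MeasurableSet[m₂] s}) := by
  refine le_antisymm (sup_le (fun s hs => ?_) (fun s hs => ?_)) (generateFrom_le ?_)
  · exact measurableSet_generateFrom ⟨s, hs, Set.univ, .univ, Set.inter_univ s⟩
  · exact measurableSet_generateFrom ⟨Set.univ, .univ, s, hs, Set.univ_inter s⟩
  · rintro _ ⟨a, ha, b, hb, rfl⟩
    exact (le_sup_left (b := m₂) a ha).inter (le_sup_right (a := m₁) b hb)

lemma comap_pi_eq_iSup {β : Type*} [MeasurableSpace β] (X : ι → Ω → β) :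
    (MeasurableSpace.pi : MeasurableSpace (ι → β)).comap (fun ω i => X i ω) =
      ⨆ i, MeasurableSpace.comap (X i) inferInstance := by
  simp only [MeasurableSpace.pi, comap_iSup, comap_comp]
  rfl

end MeasurableSpace

lemma Finset.sum_Icc_one_eq_sum_range {M : Type*} [AddCommMonoid M] (f : ℕ → M) (n : ℕ) :
    ∑ i ∈ Icc 1 n, f i = ∑ i ∈ range n, f (i + 1) := by
  rw [range_eq_Ico, sum_Ico_add' f 0 n 1]
  rfl

lemma tsum_ite_le_ofReal_mul {C A : ℕ → ℝ} {c t : ℝ} (hc : 0 ≤ c) (hC : ∀ n, 0 ≤ C n)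
    (h : ∀ n, 1 ≤ n → ∑ i ∈ Icc 1 n, C i ≤ c * A n) :
    ∑' n, (if 1 ≤ n ∧ A n ≤ t then ENNReal.ofReal (C n) else 0) ≤ ENNReal.ofReal (c * t) := by
  refine ENNReal.tsum_le_of_sum_range_le fun N => ?_
  rw [← sum_filter]
  set s := (range N).filter fun n => 1 ≤ n ∧ A n ≤ t
  rcases s.eq_empty_or_nonempty with hs | hs
  · simp [hs]
  -- the last counted index bounds the others, so no monotonicity of `A` is needed
  obtain ⟨hj, hAj⟩ := (mem_filter.1 (s.max'_mem hs)).2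
  calc ∑ n ∈ s, ENNReal.ofReal (C n)
      ≤ ∑ n ∈ Icc 1 (s.max' hs), ENNReal.ofReal (C n) :=
        sum_le_sum_of_subset fun n hn => mem_Icc.2 ⟨(mem_filter.1 hn).2.1, s.le_max' n hn⟩
    _ = ENNReal.ofReal (∑ n ∈ Icc 1 (s.max' hs), C n) :=
        (ENNReal.ofReal_sum_of_nonneg fun n _ => hC n).symm
    _ ≤ ENNReal.ofReal (c * t) :=
        ENNReal.ofReal_le_ofReal ((h _ hj).trans (mul_le_mul_of_nonneg_left hAj hc))

namespace ProbabilityTheory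

variable {Ω ι : Type*} {mΩ : MeasurableSpace Ω} {μ : Measure Ω}

section Exponential

variable {r : ℝ}

lemma integral_id_expMeasure (hr : 0 < r) : ∫ x, x ∂expMeasure r = r⁻¹ := by
  have hvanish : ∀ x ∉ Set.Ici (0 : ℝ), (exponentialPDF r x).toReal • x = 0 := fun x hx => by
    simp [exponentialPDF_of_neg (not_le.1 hx)]
  have hpos : ∀ x ∈ Set.Ioi (0 : ℝ), (exponentialPDF r x).toReal • x
      = r * (x ^ ((2 : ℝ) - 1) * Real.exp (-(r * x))) := fun x hx => by
    rw [exponentialPDF_of_nonneg (le_of_lt hx), ENNReal.toReal_ofReal (by positivity)]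
    norm_num; ring
  change ∫ x, x ∂volume.withDensity (exponentialPDF r) = r⁻¹
  rw [integral_withDensity_eq_integral_toReal_smul (f := exponentialPDF r)
      (measurable_exponentialPDFReal r).ennreal_ofReal
      (ae_of_all _ fun _ => ENNReal.ofReal_lt_top),
    ← setIntegral_eq_integral_of_forall_compl_eq_zero hvanish, integral_Ici_eq_integral_Ioi,
    setIntegral_congr_fun measurableSet_Ioi hpos, integral_const_mul,
    Real.integral_rpow_mul_exp_neg_mul_Ioi two_pos hr, Real.Gamma_two, Real.rpow_two]
  field_simp

lemma integrable_id_expMeasure (hr : 0 < r) : Integrable id (expMeasure r) :=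
  .of_integral_ne_zero (by simpa [integral_id_expMeasure hr] using hr.ne')

lemma expMeasure_Ioi_pos (hr : 0 < r) (x : ℝ) : 0 < expMeasure r (Set.Ioi x) := by
  have := isProbabilityMeasure_expMeasure hr
  rw [← Set.compl_Iic, prob_compl_eq_one_sub measurableSet_Iic, tsub_pos_iff_lt,
    ← ofReal_measureReal, ← cdf_eq_real, cdf_expMeasure_eq hr]
  split_ifs <;> simp [Real.exp_pos]

lemma integrable_of_hasLaw_expMeasure {T : Ω → ℝ} (hr : 0 < r)
    (hT : HasLaw T (expMeasure r) μ) : Integrable T μ :=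
  (integrable_map_measure aestronglyMeasurable_id hT.aemeasurable).1
    (hT.map_eq ▸ integrable_id_expMeasure hr)

end Exponential

lemma iIndep.sup_of_indep {m₁ m₂ : ι → MeasurableSpace Ω} (h₁ : iIndep m₁ μ) (h₂ : iIndep m₂ μ)
    (h : Indep (⨆ i, m₁ i) (⨆ i, m₂ i) μ) (hle₁ : ∀ i, m₁ i ≤ mΩ) (hle₂ : ∀ i, m₂ i ≤ mΩ) :
    iIndep (fun i => m₁ i ⊔ m₂ i) μ := by
  refine iIndepSets.iIndep (fun i => sup_le (hle₁ i) (hle₂ i)) _ (fun i => ?_)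
    (fun i => MeasurableSpace.sup_eq_generateFrom_image2_inter (m₁ i) (m₂ i)) ?_
  · rintro _ ⟨a, ha, b, hb, rfl⟩ _ ⟨a', ha', b', hb', rfl⟩ -
    exact ⟨a ∩ a', ha.inter ha', b ∩ b', hb.inter hb', Set.inter_inter_inter_comm a a' b b'⟩
  rw [iIndepSets_iff]
  intro s f hf
  choose! a ha b hb hab using hf
  have hsplit : ⋂ i ∈ s, f i = (⋂ i ∈ s, a i) ∩ ⋂ i ∈ s, b i := by
    rw [← Set.iInter_inter_distrib]
    refine Set.iInter_congr fun i => ?_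
    rw [← Set.iInter_inter_distrib]
    exact Set.iInter_congr fun hi => (hab i hi).symm
  have hA : MeasurableSet[⨆ i, m₁ i] (⋂ i ∈ s, a i) :=
    .biInter s.countable_toSet fun i hi => le_iSup m₁ i _ (ha i hi)
  have hB : MeasurableSet[⨆ i, m₂ i] (⋂ i ∈ s, b i) :=
    .biInter s.countable_toSet fun i hi => le_iSup m₂ i _ (hb i hi)
  rw [hsplit, (Indep_iff _ _ _).1 h _ _ hA hB, h₁.meas_biInter ha, h₂.meas_biInter hb,
    ← prod_mul_distrib]
  refine prod_congr rfl fun i hi => ?_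
  rw [← hab i hi,
    (Indep_iff _ _ _).1 h _ _ (le_iSup m₁ i _ (ha i hi)) (le_iSup m₂ i _ (hb i hi))]

lemma iIndepFun.prodMk_of_indepFun {β γ : Type*} [MeasurableSpace β] [MeasurableSpace γ]
    {f : ι → Ω → β} {g : ι → Ω → γ} (hf : iIndepFun f μ) (hg : iIndepFun g μ)
    (hfg : IndepFun (fun ω i => f i ω) (fun ω i => g i ω) μ)
    (hfm : ∀ i, Measurable (f i)) (hgm : ∀ i, Measurable (g i)) :
    iIndepFun (fun i ω => (f i ω, g i ω)) μ := by
  rw [IndepFun_iff_Indep, MeasurableSpace.comap_pi_eq_iSup,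
    MeasurableSpace.comap_pi_eq_iSup] at hfg
  rw [iIndepFun_iff_iIndep]
  convert hf.iIndep.sup_of_indep hg.iIndep hfg (fun i => (hfm i).comap_le)
    (fun i => (hgm i).comap_le) using 2 with i
  exact MeasurableSpace.comap_prodMk _ _

lemma iIndepFun.indepFun_zero_succ {β : Type*} [MeasurableSpace β] {X : ℕ → Ω → β}
    (hX : iIndepFun X μ) (hXm : ∀ i, Measurable (X i)) :
    IndepFun (X 0) (fun ω n => X (n + 1) ω) μ := by
  have hdisj : Disjoint ({0} : Set ℕ) {n | n ≠ 0} := Set.disjoint_singleton_left.2 (by simp)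
  rw [IndepFun_iff_Indep, MeasurableSpace.comap_pi_eq_iSup (fun n => X (n + 1))]
  exact indep_of_indep_of_le
    (indep_iSup_of_disjoint (fun i => (hXm i).comap_le) hX.iIndep hdisj)
    (le_biSup (fun i => MeasurableSpace.comap (X i) _) rfl)
    (iSup_le fun n => le_biSup (fun i => MeasurableSpace.comap (X i) _) n.succ_ne_zero)

lemma exists_measure_pos_forall_le_of_ae_bddAbove [NeZero μ] {f : ℕ → Ω → ℝ}
    (h : ∀ᵐ ω ∂μ, BddAbove (Set.range fun n => f n ω)) :
    ∃ M : ℕ, 0 < μ {ω | ∀ n, f n ω ≤ M} := by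
  refine exists_measure_pos_of_not_measure_iUnion_null fun h0 => ?_
  have hfalse : ∀ᵐ ω ∂μ, False := by
    filter_upwards [h, measure_eq_zero_iff_ae_notMem.1 h0] with ω ⟨b, hb⟩ hω
    obtain ⟨M, hM⟩ := exists_nat_ge b
    exact hω (Set.mem_iUnion.2 ⟨M, fun n => (hb ⟨n, rfl⟩).trans hM⟩)
  exact NeZero.ne μ (ae_eq_bot.1 (eventually_false_iff_eq_bot.1 hfalse))

lemma ae_bddAbove_partialSums_of_integral_neg {X : ℕ → Ω → ℝ} (hint : Integrable (X 0) μ)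
    (hindep : Pairwise fun i j => IndepFun (X i) (X j) μ)
    (hident : ∀ i, IdentDistrib (X i) (X 0) μ μ) (hneg : ∫ ω, X 0 ω ∂μ < 0) :
    ∀ᵐ ω ∂μ, BddAbove (Set.range fun n => ∑ i ∈ range n, X i ω) := by
  filter_upwards [strong_law_ae_real X hint hindep hident] with ω hω
  refine (Tendsto.isBoundedUnder_le_atBot ?_).bddAbove_range
  refine (hω.neg_mul_atTop hneg tendsto_natCast_atTop_atTop).congr' ?_
  filter_upwards [eventually_ne_atTop 0] with n hn
  exact div_mul_cancel₀ _ (Nat.cast_ne_zero.2 hn)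

lemma measure_sub_mul_le_pos [IsProbabilityMeasure μ] {T S : Ω → ℝ} {r c : ℝ} (hr : 0 < r)
    (hc : 0 < c) (hT : HasLaw T (expMeasure r) μ) (hTS : IndepFun T S μ) (a : ℝ) :
    0 < μ {ω | S ω - c * T ω ≤ a} := by
  obtain ⟨K, hK⟩ : ∃ K : ℕ, 0 < μ (S ⁻¹' Set.Iic K) := by
    refine exists_measure_pos_of_not_measure_iUnion_null ?_
    rw [Set.iUnion_eq_univ_iff.2 fun ω => ⟨⌈S ω⌉₊, Nat.le_ceil (S ω)⟩, measure_univ]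
    exact one_ne_zero
  have hTlarge : 0 < μ (T ⁻¹' Set.Ioi ((K - a) / c)) := by
    rw [← Measure.map_apply₀ hT.aemeasurable measurableSet_Ioi.nullMeasurableSet, hT.map_eq]
    exact expMeasure_Ioi_pos hr _
  calc 0 < μ (T ⁻¹' Set.Ioi ((K - a) / c)) * μ (S ⁻¹' Set.Iic K) :=
        ENNReal.mul_pos hTlarge.ne' hK.ne'
    _ = μ (T ⁻¹' Set.Ioi ((K - a) / c) ∩ S ⁻¹' Set.Iic K) :=
        (hTS.measure_inter_preimage_eq_mul _ _ measurableSet_Ioi measurableSet_Iic).symm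
    _ ≤ μ {ω | S ω - c * T ω ≤ a} := measure_mono fun ω ⟨hTω, hSω⟩ => by
        rw [Set.mem_preimage, Set.mem_Ioi, div_lt_iff₀ hc] at hTω
        simp only [Set.mem_preimage, Set.mem_Iic] at hSω
        show S ω - c * T ω ≤ a
        linarith

lemma measure_forall_sum_range_nonpos_pos [IsProbabilityMeasure μ] {X : ℕ → Ω → ℝ}
    (hX : iIndepFun X μ) (hXm : ∀ i, Measurable (X i))
    (hident : ∀ i, IdentDistrib (X i) (X 0) μ μ) (hint : Integrable (X 0) μ)
    (hneg : ∫ ω, X 0 ω ∂μ < 0) (hlow : ∀ a, 0 < μ {ω | X 0 ω ≤ a}) :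
    0 < μ {ω | ∀ n, ∑ i ∈ range n, X i ω ≤ 0} := by
  obtain ⟨M, hM⟩ := exists_measure_pos_forall_le_of_ae_bddAbove
    (ae_bddAbove_partialSums_of_integral_neg (X := fun i => X (i + 1))
      ((hident 1).integrable_iff.2 hint)
      (fun i j hij => hX.indepFun (Nat.succ_injective.ne hij))
      (fun i => (hident (i + 1)).trans (hident 1).symm) ((hident 1).integral_eq ▸ hneg))
  have hboth : 0 < μ (X 0 ⁻¹' Set.Iic (-M) ∩
      (fun ω n => X (n + 1) ω) ⁻¹' {v | ∀ n, ∑ i ∈ range n, v i ≤ M}) := by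
    rw [(hX.indepFun_zero_succ hXm).measure_inter_preimage_eq_mul _ _ measurableSet_Iic
      (by measurability)]
    exact ENNReal.mul_pos (hlow _).ne' hM.ne'
  refine hboth.trans_le (measure_mono fun ω ⟨hfirst, hrest⟩ => ?_)
  rintro (_ | n)
  · simp
  rw [sum_range_succ']
  linarith [hrest n, show X 0 ω ≤ -M from hfirst]

def driftIncrement (E C : ℕ → Ω → ℝ) (c : ℝ) (i : ℕ) (ω : Ω) : ℝ :=
  C (i + 1) ω - c * E (i + 1) ω

section DriftIncrement

variable {E C : ℕ → Ω → ℝ} {c : ℝ}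

lemma measurable_driftIncrement (hE : ∀ i, Measurable (E i)) (hC : ∀ i, Measurable (C i))
    (i : ℕ) : Measurable (driftIncrement E C c i) :=
  (hC _).sub ((hE _).const_mul c)

lemma iIndepFun_driftIncrement (hE : ∀ i, Measurable (E i)) (hC : ∀ i, Measurable (C i))
    (hEi : iIndepFun (fun i => E (i + 1)) μ) (hCi : iIndepFun (fun i => C (i + 1)) μ)
    (hEC : IndepFun (fun ω i => E i ω) (fun ω i => C i ω) μ) :
    iIndepFun (driftIncrement E C c) μ := by
  have hshift : Measurable fun (v : ℕ → ℝ) n => v (n + 1) := by fun_prop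
  exact (hEi.prodMk_of_indepFun hCi (hEC.comp hshift hshift) (fun _ => hE _)
    (fun _ => hC _)).comp (fun _ p => p.2 - c * p.1) (fun _ => by fun_prop)

lemma identDistrib_driftIncrement [IsFiniteMeasure μ] {ν : Measure ℝ}
    (hE : ∀ i, HasLaw (E (i + 1)) ν μ) (hC : ∀ i, IdentDistrib (C (i + 1)) (C 1) μ μ)
    (hEC : IndepFun (fun ω i => E i ω) (fun ω i => C i ω) μ) (i : ℕ) :
    IdentDistrib (driftIncrement E C c i) (driftIncrement E C c 0) μ μ :=
  have hECi (j : ℕ) : IndepFun (E j) (C j) μ :=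
    hEC.comp (measurable_pi_apply j) (measurable_pi_apply j)
  (IdentDistrib.prodMk ⟨(hE i).aemeasurable, (hE 0).aemeasurable,
    (hE i).map_eq.trans (hE 0).map_eq.symm⟩ (hC i) (hECi _) (hECi 1)).comp
    (by fun_prop : Measurable fun p : ℝ × ℝ => p.2 - c * p.1)

lemma integrable_driftIncrement_zero {r : ℝ} (hr : 0 < r) (hE : HasLaw (E 1) (expMeasure r) μ)
    (hC : Integrable (C 1) μ) : Integrable (driftIncrement E C c 0) μ :=
  hC.sub ((integrable_of_hasLaw_expMeasure hr hE).const_mul c)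

lemma integral_driftIncrement_zero {r : ℝ} (hr : 0 < r) (hE : HasLaw (E 1) (expMeasure r) μ)
    (hC : Integrable (C 1) μ) :
    ∫ ω, driftIncrement E C c 0 ω ∂μ = ∫ ω, C 1 ω ∂μ - c / r := by
  simp only [driftIncrement]
  rw [integral_sub hC ((integrable_of_hasLaw_expMeasure hr hE).const_mul c),
    integral_const_mul, hE.integral_eq, integral_id_expMeasure hr, div_eq_mul_inv]

end DriftIncrement

end ProbabilityTheory

theorem compound_poisson_stays_below_rate_general
    {Ω : Type*} [MeasureSpace Ω] [IsProbabilityMeasure (ℙ : Measure Ω)]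
    (lam : ℝ) (hlam : 0 < lam)
    (E : ℕ → Ω → ℝ) (hEmeas : ∀ i, Measurable (E i))
    (hEindep : iIndepFun (fun (i : ℕ) => E (i + 1)) ℙ)
    (hEdist : ∀ i : ℕ, Measure.map (E (i + 1)) ℙ = expMeasure lam)
    (C : ℕ → Ω → ℝ) (hCmeas : ∀ i, Measurable (C i))
    (hCindep : iIndepFun (fun (i : ℕ) => C (i + 1)) ℙ)
    (hCident : ∀ i : ℕ, IdentDistrib (C (i + 1)) (C 1) ℙ ℙ)
    (hCnn : ∀ i, ∀ᵐ ω ∂ℙ, 0 ≤ C i ω)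
    (hCint : Integrable (C 1) ℙ)
    (m : ℝ) (hm : m = ∫ ω, C 1 ω ∂ℙ)
    (hEC : IndepFun (fun ω (i : ℕ) => E i ω) (fun ω (i : ℕ) => C i ω) ℙ)
    (ε : ℝ) (hε : 0 < ε) :
    0 < ℙ {ω | ∀ t : ℝ, 0 < t →
      (∑' n : ℕ, if 1 ≤ n ∧ (∑ i ∈ Finset.Icc 1 n, E i ω) ≤ t
        then ENNReal.ofReal (C n ω) else 0)
      ≤ ENNReal.ofReal ((lam * m + ε) * t)} := by
  set c := lam * m + ε with hc_def
  have hc : 0 < c := by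
    have : 0 ≤ m := hm ▸ integral_nonneg_of_ae (hCnn 1)
    positivity
  have hElaw (i : ℕ) : HasLaw (E (i + 1)) (expMeasure lam) ℙ :=
    ⟨(hEmeas _).aemeasurable, hEdist i⟩
  have hneg : ∫ ω, driftIncrement E C c 0 ω ∂ℙ < 0 := by
    rw [integral_driftIncrement_zero hlam (hElaw 0) hCint, ← hm, sub_neg, lt_div_iff₀ hlam]
    linarith [mul_comm lam m]
  have hwalk := measure_forall_sum_range_nonpos_pos
    (iIndepFun_driftIncrement hEmeas hCmeas hEindep hCindep hEC)
    (measurable_driftIncrement hEmeas hCmeas) (identDistrib_driftIncrement hElaw hCident hEC)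
    (integrable_driftIncrement_zero hlam (hElaw 0) hCint) hneg
    (measure_sub_mul_le_pos hlam hc (hElaw 0)
      (hEC.comp (measurable_pi_apply 1) (measurable_pi_apply 1)))
  refine hwalk.trans_le (measure_mono_ae ?_)
  filter_upwards [ae_all_iff.2 hCnn] with ω hCω hω t _
  refine tsum_ite_le_ofReal_mul hc.le hCω fun n _ => ?_
  have hsum := hω n
  simp only [driftIncrement, sum_sub_distrib, ← mul_sum] at hsum
  rw [sum_Icc_one_eq_sum_range, sum_Icc_one_eq_sum_range]
  linarith

/-- Compound Poisson score process stays below its average rate forever with positive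
probability: with i.i.d. exponential(`λ`) interarrival times `E i`, i.i.d. nonnegative
integrable scores `C i` of mean `m > 0` independent of the interarrival times, arrival
times `A n = ∑_{i=1}^n E i` and score process `S t = ∑_{n : A n ≤ t} C n`, for every
`ε > 0` the event that `S t ≤ (λ m + ε) t` for all `t > 0` has probability `> 0`. -/
theorem compound_poisson_stays_below_rate
    {Ω : Type*} [MeasureSpace Ω] [IsProbabilityMeasure (ℙ : Measure Ω)]
    (lam : ℝ) (hlam : 0 < lam)
    (E : ℕ → Ω → ℝ) (hEmeas : ∀ i, Measurable (E i))
    (hEindep : iIndepFun (fun (i : ℕ) => E (i + 1)) ℙ)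
    (hEdist : ∀ i : ℕ, Measure.map (E (i + 1)) ℙ = expMeasure lam)
    (C : ℕ → Ω → ℝ) (hCmeas : ∀ i, Measurable (C i))
    (hCindep : iIndepFun (fun (i : ℕ) => C (i + 1)) ℙ)
    (hCident : ∀ i : ℕ, IdentDistrib (C (i + 1)) (C 1) ℙ ℙ)
    (hCnn : ∀ i, ∀ᵐ ω ∂ℙ, 0 ≤ C i ω)
    (hCint : Integrable (C 1) ℙ)
    (m : ℝ) (hm : m = ∫ ω, C 1 ω ∂ℙ) (hmpos : 0 < m)
    (hEC : IndepFun (fun ω (i : ℕ) => E i ω) (fun ω (i : ℕ) => C i ω) ℙ)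
    (ε : ℝ) (hε : 0 < ε) :
    0 < ℙ {ω | ∀ t : ℝ, 0 < t →
      (∑' n : ℕ, if 1 ≤ n ∧ (∑ i ∈ Finset.Icc 1 n, E i ω) ≤ t
        then ENNReal.ofReal (C n ω) else 0)
      ≤ ENNReal.ofReal ((lam * m + ε) * t)} :=
  compound_poisson_stays_below_rate_general lam hlam E hEmeas hEindep hEdist C hCmeas hCindep
    hCident hCnn hCint m hm hEC ε hε
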